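/- arXiv:math/0305154 — 2 statements merged into one kernel-verified Lean document; each statement's English description precedes it below -/
import Mathlib

section
/- Let L be a finite meet-semilattice and G a building set of L, enumerated as G = {G₁,…,G_t} in a linear extension compatible order, i.e., G_i > G_j implies i < j. Let Bl_k L denote the iterated combinatorial blowup Bl_{G_k}(Bl_{G_{k-1}}(… Bl_{G₁} L)) for 1 ≤ k ≤ t (at each step blowing up the element corresponding to G_k in the current semilattice). Then the final semilattice Bl_t L is order-isomorphic to the face poset of the simplicial complex N(G) of nested sets, i.e., to the set of all nested subsets of G (including the empty set) ordered by inclusion. -/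
attribute [local instance] Classical.propDecidable

universe u

/-- The set of maximal elements of `G` below `x`. -/
def maxBelow {L : Type u} [PartialOrder L] (G : Set L) (x : L) : Set L :=
  {g | g ∈ G ∧ g ≤ x ∧ ∀ h ∈ G, h ≤ x → g ≤ h → h = g}

/-- The tuple in the product of lower intervals which is `g` in the coordinate
indexed by `g` and bottom elsewhere. -/
noncomputable def deltaTuple {L : Type u} [PartialOrder L] [OrderBot L] (G : Set L) (x : L)
    (g : maxBelow G x) : (h : maxBelow G x) → Set.Iic (h : L) :=
  fun h => if (h : L) = (g : L) then ⟨(h : L), le_refl _⟩ else ⟨⊥, bot_le⟩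

/-- `G` is a (combinatorial) building set: `G` avoids the bottom element, and for every
`x ≠ ⊥` the interval `[⊥, x]` decomposes as the product of the intervals below the maximal
elements of `G` below `x`, via an isomorphism sending delta tuples to the corresponding
maximal elements. -/
def IsBuilding {L : Type u} [PartialOrder L] [OrderBot L] (G : Set L) : Prop :=
  (∀ g ∈ G, g ≠ ⊥) ∧
  ∀ x : L, x ≠ ⊥ →
    ∃ φ : ((h : maxBelow G x) → Set.Iic (h : L)) ≃o Set.Iic x,
      ∀ g : maxBelow G x, ((φ (deltaTuple G x g) : Set.Iic x) : L) = (g : L)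

/-- A subset `N` of a building set `G` is nested if for every finite set of at least two
pairwise incomparable elements of `N`, the join exists and does not belong to `G`. -/
def IsNested {L : Type u} [PartialOrder L] (G N : Set L) : Prop :=
  N ⊆ G ∧ ∀ T : Finset L, ↑T ⊆ N → 2 ≤ T.card →
    (∀ a ∈ T, ∀ b ∈ T, a ≠ b → ¬ a ≤ b) →
    ∃ j : L, IsLUB (↑T : Set L) j ∧ j ∉ G

/-- The combinatorial blowup of `L` at `α`: elements are either `y ∈ L` with `y ≱ α`
(encoded `(false, y)`), or symbols `[α, y]` for `y ≱ α` such that `y ∨ α` exists in `L`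
(encoded `(true, y)`); the order is induced by the product order on `Bool × L`. -/
def Blowup (L : Type u) [PartialOrder L] (α : L) : Type u :=
  {p : Bool × L // ¬ α ≤ p.2 ∧ (p.1 = true → ∃ j : L, IsLUB {α, p.2} j)}

noncomputable instance blowupPartialOrder {L : Type u} [PartialOrder L] (α : L) :
    PartialOrder (Blowup L α) :=
  inferInstanceAs (PartialOrder
    {p : Bool × L // ¬ α ≤ p.2 ∧ (p.1 = true → ∃ j : L, IsLUB {α, p.2} j)})

/-- The element of the blowup corresponding to `y ∈ L`, `y ≱ α`. -/
def Blowup.mk1 {L : Type u} [PartialOrder L] {α : L} (y : L) (hy : ¬ α ≤ y) : Blowup L α :=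
  ⟨(false, y), hy, fun hb => Bool.noConfusion hb⟩

/-- The element `[α, y]` of the blowup, for `y ≱ α` such that `y ∨ α` exists. -/
def Blowup.mk2 {L : Type u} [PartialOrder L] {α : L} (y : L) (hy : ¬ α ≤ y)
    (hj : ∃ j : L, IsLUB {α, y} j) : Blowup L α :=
  ⟨(true, y), hy, fun _ => hj⟩

/-- A poset together with a partially defined map from `L`, tracking the copies of the
elements of `L` through iterated blowups. -/
structure BlowupState (L : Type u) where
  carrier : Type u
  order : PartialOrder carrier
  emb : L → Option carrier

/-- The initial state: `L` itself, with every element tracked by itself. -/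
def initState (L : Type u) [PartialOrder L] : BlowupState L where
  carrier := L
  order := inferInstance
  emb := fun y => some y

/-- One step: blow up the current poset at the element corresponding to `g` (if it is
still tracked), and update the tracking map: `y` survives as the copy `(false, y)`
whenever that is an element of the blowup. -/
noncomputable def blowupStep {L : Type u} (S : BlowupState L) (g : L) : BlowupState L :=
  match S.emb g with
  | none => S
  | some a =>
    letI := S.order
    { carrier := Blowup S.carrier a
      order := blowupPartialOrder a
      emb := fun y =>
        match S.emb y with
        | none => none
        | some b =>
          if h : ¬ a ≤ b then some (Blowup.mk1 b h) else none }

/-- The iterated combinatorial blowup along a list of elements of `L`. -/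
noncomputable def iterBlowup (L : Type u) [PartialOrder L] (l : List L) : BlowupState L :=
  l.foldl blowupStep (initState L)

/-!
After the elements of an upward closed part `D` of the building set have been blown up, the
semilattice is isomorphic to the poset of pairs `(N, x)` with `N ⊆ D`, `x` above no element of
`D` and `N ∪ max G_{≤x}` nested, ordered componentwise; the copy of `y ∈ L` is `(∅, y)`.
Blowing up `(∅, g)` for the next element `g` yields the same model for `D ∪ {g}`, with
`[(∅, g), (N, x)]` becoming `(N ∪ {g}, x)`: the join of `(∅, g)` and `(N, x)` exists exactly
when `{g} ∪ N ∪ max G_{≤x}` is nested, and it is then `(N, g ∨ x)`. Once `D = G` the second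
component is forced to be `0̂`, and only the nested sets remain.

The join criterion rests on one consequence of the product decomposition of `[0̂, w]`: if `w` is
the join of a nested antichain `T`, every maximal element of `G` below `w` lies in `T`.
-/

theorem exists_isLUB_of_mem_upperBounds {L : Type*} [SemilatticeInf L] [Finite L] {s : Set L}
    {z : L} (hz : z ∈ upperBounds s) : ∃ j, IsLUB s j := by
  obtain ⟨m, hm⟩ := (upperBounds s).toFinite.exists_minimal ⟨z, hz⟩
  refine ⟨m, hm.prop, fun u hu => ?_⟩
  have hmu : m ⊓ u ∈ upperBounds s := fun a ha => le_inf (hm.prop ha) (hu ha)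
  exact hm.eq_of_le hmu inf_le_left ▸ inf_le_right

theorem isLUB_setOf_maximal_iff {α : Type*} [Preorder α] {A : Set α} (hA : A.Finite) {u : α} :
    IsLUB {a | Maximal (· ∈ A) a} u ↔ IsLUB A u := by
  suffices upperBounds {a | Maximal (· ∈ A) a} = upperBounds A by rw [IsLUB, IsLUB, this]
  refine Set.Subset.antisymm (fun v hv a ha => ?_) (upperBounds_mono_set fun a ha => ha.prop)
  obtain ⟨b, hab, hb⟩ := hA.exists_le_maximal ha
  exact hab.trans (hv hb)

theorem IsAntichain.lt_of_isLUB {α : Type*} [PartialOrder α] {T : Set α}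
    (hanti : IsAntichain (· ≤ ·) T) (hT : T.Nontrivial) {s t : α} (hs : IsLUB T s)
    (ht : t ∈ T) : t < s := by
  refine (hs.1 ht).lt_of_ne fun hts => ?_
  obtain ⟨t', ht', hne⟩ := hT.exists_ne t
  exact hanti ht' ht hne (hts ▸ hs.1 ht')

theorem OrderIso.exists_isLUB_pair_iff {α β : Type*} [Preorder α] [Preorder β] (e : α ≃o β)
    {a b : α} : (∃ j, IsLUB {e a, e b} j) ↔ ∃ j, IsLUB {a, b} j := by
  rw [← Set.image_pair]
  exact ⟨fun ⟨j, hj⟩ => ⟨e.symm j, e.isLUB_image.1 hj⟩, fun ⟨j, hj⟩ => ⟨e j, e.isLUB_image'.2 hj⟩⟩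

def Blowup.congr {α β : Type u} [PartialOrder α] [PartialOrder β] (e : α ≃o β) {a : α} {b : β}
    (hab : e a = b) : Blowup α a ≃o Blowup β b where
  toFun z := ⟨(z.1.1, e z.1.2), fun h => z.2.1 (e.le_iff_le.1 (hab.trans_le h)),
    fun h => by rw [← hab]; exact e.exists_isLUB_pair_iff.2 (z.2.2 h)⟩
  invFun z := ⟨(z.1.1, e.symm z.1.2), fun h => z.2.1 (hab.symm.trans_le (e.le_symm_apply.1 h)),
    fun h => e.exists_isLUB_pair_iff.1 (by rw [hab, e.apply_symm_apply]; exact z.2.2 h)⟩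
  left_inv z := Subtype.ext (Prod.ext rfl (e.symm_apply_apply _))
  right_inv z := Subtype.ext (Prod.ext rfl (e.apply_symm_apply _))
  map_rel_iff' := and_congr Iff.rfl e.le_iff_le

theorem Set.cond_insert_subset_cond_insert_iff {α : Type*} {g : α} {N N' : Set α} (hN : g ∉ N)
    (hN' : g ∉ N') {b b' : Bool} :
    cond b (insert g N) N ⊆ cond b' (insert g N') N' ↔ b ≤ b' ∧ N ⊆ N' := by
  cases b <;> cases b' <;>
    simp [Set.insert_subset_iff, Set.insert_subset_insert_iff hN,
      Set.subset_insert_iff_of_notMem hN, hN']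

section Nested

variable {L : Type u} [PartialOrder L] {G N : Set L}

theorem exists_le_mem_maxBelow [Finite L] {g x : L} (hg : g ∈ G) (hgx : g ≤ x) :
    ∃ m ∈ maxBelow G x, g ≤ m := by
  obtain ⟨m, hgm, hm⟩ := Finite.exists_le_maximal (p := fun h => h ∈ G ∧ h ≤ x) ⟨hg, hgx⟩
  exact ⟨m, ⟨hm.prop.1, hm.prop.2, fun h hh hhx hmh => hm.eq_of_ge ⟨hh, hhx⟩ hmh⟩, hgm⟩

theorem IsNested.mono {M : Set L} (hN : IsNested G N) (hMN : M ⊆ N) : IsNested G M :=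
  ⟨hMN.trans hN.1, fun T hT => hN.2 T (hT.trans hMN)⟩

theorem IsNested.exists_isLUB_notMem [Finite L] (hN : IsNested G N) {T : Set L} (hTN : T ⊆ N)
    (hT : T.Nontrivial) (hanti : IsAntichain (· ≤ ·) T) : ∃ j, IsLUB T j ∧ j ∉ G := by
  have hfin := T.toFinite
  simpa using hN.2 hfin.toFinset (by simpa using hTN)
    (Finset.one_lt_card_iff_nontrivial.2 (hfin.toFinset_nontrivial.2 hT))
    fun a ha b hb hab => hanti (by simpa using ha) (by simpa using hb) hab

theorem IsNested.exists_isLUB [Finite L] [OrderBot L] (hN : IsNested G N) {T : Set L}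
    (hTN : T ⊆ N) (hanti : IsAntichain (· ≤ ·) T) : ∃ j, IsLUB T j := by
  rcases T.eq_empty_or_nonempty with rfl | hne
  · exact ⟨⊥, isLUB_empty⟩
  rcases hne.exists_eq_singleton_or_nontrivial with ⟨a, rfl⟩ | hnt
  · exact ⟨a, isLUB_singleton⟩
  · obtain ⟨j, hj, -⟩ := hN.exists_isLUB_notMem hTN hnt hanti
    exact ⟨j, hj⟩

theorem isNested_maxBelow {L : Type u} [SemilatticeInf L] [Finite L] {G : Set L} (x : L) :
    IsNested G (maxBelow G x) := by
  refine ⟨fun _ hm => hm.1, fun T hT hcard hanti => ?_⟩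
  obtain ⟨s, hs⟩ := exists_isLUB_of_mem_upperBounds (s := (T : Set L)) (z := x)
    fun t ht => (hT ht).2.1
  refine ⟨s, hs, fun hsG => ?_⟩
  obtain ⟨t₁, ht₁, t₂, ht₂, hne⟩ := Finset.one_lt_card.1 hcard
  have hst₁ : s = t₁ := (hT ht₁).2.2 s hsG (hs.2 fun t ht => (hT ht).2.1) (hs.1 ht₁)
  exact hanti t₂ ht₂ t₁ ht₁ hne.symm (hst₁ ▸ hs.1 ht₂)

end Nested

section BuildingIso

variable {L : Type u} [PartialOrder L] [OrderBot L] {G : Set L} {x : L}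

theorem deltaTuple_le_iff {f : (h : maxBelow G x) → Set.Iic (h : L)} {g : maxBelow G x} :
    deltaTuple G x g ≤ f ↔ f g = ⊤ := by
  refine ⟨fun h => ?_, fun hf h => ?_⟩
  · have := h g
    rw [deltaTuple, if_pos rfl] at this
    exact top_le_iff.1 this
  by_cases hh : h = g
  · subst hh
    rw [hf]
    exact le_top
  · rw [deltaTuple, if_neg (Subtype.coe_ne_coe.2 hh)]
    exact bot_le

theorem symm_apply_eq_bot_of_le (φ : ((h : maxBelow G x) → Set.Iic (h : L)) ≃o Set.Iic x)
    (hφ : ∀ g : maxBelow G x, ((φ (deltaTuple G x g) : Set.Iic x) : L) = (g : L))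
    {z : Set.Iic x} {m h : maxBelow G x} (hzm : (z : L) ≤ m) (hh : h ≠ m) : φ.symm z h = ⊥ := by
  have hle : φ.symm z ≤ deltaTuple G x m :=
    φ.symm_apply_le.2 (by rw [← Subtype.coe_le_coe, hφ]; exact hzm)
  have := hle h
  rw [deltaTuple, if_neg (Subtype.coe_ne_coe.2 hh)] at this
  exact le_bot_iff.1 this

end BuildingIso

section Building

variable {L : Type u} [SemilatticeInf L] [OrderBot L] {G N : Set L}

theorem isLUB_maxBelow (hG : IsBuilding G) (x : L) : IsLUB (maxBelow G x) x := by
  refine ⟨fun m hm => hm.2.1, fun z hz => ?_⟩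
  rcases eq_or_ne x ⊥ with rfl | hx
  · exact bot_le
  obtain ⟨φ, hφ⟩ := hG.2 x hx
  have htop : φ.symm ⟨x ⊓ z, inf_le_left⟩ = ⊤ := by
    refine eq_top_iff.2 fun m => (deltaTuple_le_iff.1 (φ.le_symm_apply.2 ?_)).ge
    rw [← Subtype.coe_le_coe, hφ m]
    exact le_inf m.2.2.1 (hz m.2)
  have hxz : (⟨x ⊓ z, inf_le_left⟩ : Set.Iic x) = ⊤ := by
    rw [← φ.apply_symm_apply ⟨x ⊓ z, inf_le_left⟩, htop, φ.map_top]
  exact inf_eq_left.1 (congrArg Subtype.val hxz)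

theorem eq_bot_of_forall_not_le (hG : IsBuilding G) {x : L} (hx : ∀ g ∈ G, ¬ g ≤ x) :
    x = ⊥ := by
  have hempty : maxBelow G x = ∅ := Set.eq_empty_of_forall_notMem fun m hm => hx m hm.1 hm.2.1
  have hlub := isLUB_maxBelow hG x
  rw [hempty] at hlub
  exact hlub.unique isLUB_empty

variable [Finite L]

theorem isLUB_setOf_le_of_mem_maxBelow (hG : IsBuilding G) {S : Set L} (hSG : S ⊆ G) {w m : L}
    (hS : IsLUB S w) (hm : m ∈ maxBelow G w) : IsLUB {s ∈ S | s ≤ m} m := by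
  refine ⟨fun s hs => hs.2, fun u hu => ?_⟩
  obtain ⟨φ, hφ⟩ := hG.2 w fun hw => hG.1 m hm.1 (le_bot_iff.1 (hw ▸ hm.2.1))
  set mI : maxBelow G w := ⟨m, hm⟩
  set a := φ.symm ⟨u ⊓ w, inf_le_right⟩
  -- Raising all coordinates of `a` but the `m`-th one to the top gives an upper bound of `S`,
  -- because the elements of `S` not below `m` have trivial `m`-th coordinate.
  set v : (h : maxBelow G w) → Set.Iic (h : L) := Function.update ⊤ mI (a mI) with hv_def
  have hSv : ∀ s ∈ S, s ≤ (φ v : L) := by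
    intro s hs
    have hsw : s ≤ w := hS.1 hs
    set s' : Set.Iic w := ⟨s, hsw⟩
    change s' ≤ φ v
    rw [← φ.symm_apply_le]
    intro h
    rcases eq_or_ne h mI with rfl | hh
    · rw [hv_def, Function.update_self]
      by_cases hsm : s ≤ m
      · exact φ.symm.monotone (le_inf (hu ⟨hs, hsm⟩) hsw : s' ≤ ⟨u ⊓ w, inf_le_right⟩) _
      · obtain ⟨m', hm', hsm'⟩ := exists_le_mem_maxBelow (hSG hs) hsw
        have hne : mI ≠ ⟨m', hm'⟩ := fun h => hsm (by
          rw [show m = m' from congrArg Subtype.val h]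
          exact hsm')
        rw [symm_apply_eq_bot_of_le φ hφ (z := s') (m := ⟨m', hm'⟩) hsm' hne]
        exact bot_le
    · rw [hv_def, Function.update_of_ne hh]
      exact le_top
  have hv : v = ⊤ := by
    rw [← φ.symm_apply_apply v, ← φ.symm.map_top]
    exact congrArg φ.symm (top_le_iff.1 (hS.2 hSv))
  have ha : a mI = ⊤ := by simpa [v] using congrFun hv mI
  calc m = φ (deltaTuple G w mI) := (hφ mI).symm
    _ ≤ (φ a : L) := φ.monotone (deltaTuple_le_iff.2 ha)
    _ = u ⊓ w := by simp [a]
    _ ≤ u := inf_le_left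

theorem maxBelow_subset_of_isLUB (hG : IsBuilding G) (hN : IsNested G N) {T : Set L}
    (hTN : T ⊆ N) (hanti : IsAntichain (· ≤ ·) T) {w : L} (hw : IsLUB T w) :
    maxBelow G w ⊆ T := by
  intro m hm
  have hTm := isLUB_setOf_le_of_mem_maxBelow hG (hTN.trans hN.1) hw hm
  have hne : {t ∈ T | t ≤ m}.Nonempty := by
    refine Set.nonempty_iff_ne_empty.2 fun h => hG.1 m hm.1 ?_
    rw [h] at hTm
    exact hTm.unique isLUB_empty
  rcases hne.exists_eq_singleton_or_nontrivial with ⟨t, ht⟩ | hnt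
  · have htm : t = m := isLUB_singleton.unique (ht ▸ hTm)
    have htT : t ∈ {t ∈ T | t ≤ m} := ht ▸ rfl
    exact htm ▸ htT.1
  · obtain ⟨j, hj, hjG⟩ :=
      hN.exists_isLUB_notMem (fun t ht => hTN ht.1) hnt (hanti.subset fun t ht => ht.1)
    exact absurd (hj.unique hTm ▸ hm.1) hjG

theorem IsNested.exists_isLUB_maxBelow_subset (hG : IsBuilding G) (hN : IsNested G N)
    {A : Set L} (hAN : A ⊆ N) : ∃ u, IsLUB A u ∧ maxBelow G u ⊆ A := by
  have hmaxN : {a | Maximal (· ∈ A) a} ⊆ N := fun a ha => hAN ha.prop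
  have hanti := setOfPred_maximal_antichain (· ∈ A)
  obtain ⟨u, hu⟩ := hN.exists_isLUB hmaxN hanti
  exact ⟨u, (isLUB_setOf_maximal_iff A.toFinite).1 hu,
    (maxBelow_subset_of_isLUB hG hN hmaxN hanti hu).trans fun a ha => ha.prop⟩

theorem exists_mem_upperBounds_of_isNested (hG : IsBuilding G) {Nz : Set L} {z : L}
    (hNz : IsNested G (Nz ∪ maxBelow G z)) {T : Set L}
    (hT : ∀ t ∈ T, t ∉ Nz → t ∈ G ∧ t ≤ z) :
    ∃ u ∈ upperBounds T, ∀ s ∈ G, s ≤ u → (∃ t ∈ T, s ≤ t) ∨ s ≤ z := by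
  set A : Set L := {t ∈ T | t ∈ Nz} ∪ {m ∈ maxBelow G z | ∃ t ∈ T, t ≤ m}
  have hA : A ⊆ Nz ∪ maxBelow G z := Set.union_subset_union (fun t ht => ht.2) fun m hm => hm.1
  obtain ⟨u, hu, hmax⟩ := hNz.exists_isLUB_maxBelow_subset hG hA
  refine ⟨u, fun t ht => ?_, fun s hs hsu => ?_⟩
  · by_cases htN : t ∈ Nz
    · exact hu.1 (Or.inl ⟨ht, htN⟩)
    · obtain ⟨m, hm, htm⟩ := exists_le_mem_maxBelow (hT t ht htN).1 (hT t ht htN).2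
      exact htm.trans (hu.1 (Or.inr ⟨hm, t, ht, htm⟩))
  · obtain ⟨m, hm, hsm⟩ := exists_le_mem_maxBelow hs hsu
    rcases hmax hm with ⟨hmT, -⟩ | ⟨hmz, -⟩
    · exact Or.inl ⟨m, hmT, hsm⟩
    · exact Or.inr (hsm.trans hmz.2.1)

end Building

section Model

variable {L : Type u} [SemilatticeInf L] {G D : Set L} {g : L}

/-- `(N, x)` encodes the element `[n_k, [ …, [n_1, x]]]` of the iterated blowup along `D`, where
`N = {n_1, …, n_k}`. -/
def blowupModel (G D : Set L) : Set (Set L × L) :=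
  {p | p.1 ⊆ D ∧ (∀ d ∈ D, ¬ d ≤ p.2) ∧ IsNested G (p.1 ∪ maxBelow G p.2)}

theorem cond_insert_mem_blowupModel {b : Bool} {p : Set L × L} (hp : p ∈ blowupModel G D)
    (hgp : ¬ g ≤ p.2) (hb : b = true → IsNested G (insert g (p.1 ∪ maxBelow G p.2))) :
    (cond b (insert g p.1) p.1, p.2) ∈ blowupModel G (insert g D) := by
  obtain ⟨hpD, hpx, hpN⟩ := hp
  refine ⟨?_, ?_, ?_⟩
  · cases b
    · exact hpD.trans (Set.subset_insert _ _)
    · exact Set.insert_subset_insert hpD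
  · rintro d (rfl | hd)
    exacts [hgp, hpx d hd]
  · cases b
    · exact hpN
    · simpa only [cond_true, Set.insert_union] using hb rfl

theorem sdiff_singleton_mem_blowupModel {p : Set L × L} (hp : p ∈ blowupModel G (insert g D)) :
    (p.1 \ {g}, p.2) ∈ blowupModel G D :=
  ⟨fun _ ha => (hp.1 ha.1).resolve_left ha.2, fun d hd => hp.2.1 d (Or.inr hd),
    hp.2.2.mono (Set.union_subset_union_left _ Set.sdiff_subset)⟩

variable [Finite L]

theorem empty_prod_mem_blowupModel {y : L} (hy : ∀ d ∈ D, ¬ d ≤ y) :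
    ((∅ : Set L), y) ∈ blowupModel G D :=
  ⟨Set.empty_subset D, hy, by simpa using isNested_maxBelow y⟩

def blowupModelCopy (G : Set L) {D : Set L} {y : L} (hy : ∀ d ∈ D, ¬ d ≤ y) :
    blowupModel G D :=
  ⟨(∅, y), empty_prod_mem_blowupModel hy⟩

variable [OrderBot L]

theorem isNested_insert_of_le (hG : IsBuilding G) (hD : ∀ d ∈ D, ∀ h ∈ G, d ≤ h → h ∈ D)
    (hgG : g ∈ G) (hg : ∀ h ∈ G, g < h → h ∈ D) {p q : Set L × L} (hp : p ∈ blowupModel G D)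
    (hq : q ∈ blowupModel G D) (hpq : p ≤ q) (hgq : g ≤ q.2) :
    IsNested G (insert g (p.1 ∪ maxBelow G p.2)) := by
  obtain ⟨hND, -, hnx⟩ := hp
  obtain ⟨-, hzD, hnz⟩ := hq
  refine ⟨Set.insert_subset hgG hnx.1, fun T hT hcard hanti => ?_⟩
  by_cases hTx : (T : Set L) ⊆ maxBelow G p.2
  · exact hnx.2 T (hTx.trans Set.subset_union_right) hcard hanti
  obtain ⟨t₀, ht₀T, ht₀x⟩ := Set.not_subset.1 hTx
  have hTz : ∀ t ∈ (T : Set L), t ∉ q.1 → t ∈ G ∧ t ≤ q.2 := by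
    intro t ht htq
    rcases hT ht with rfl | htN | htx
    · exact ⟨hgG, hgq⟩
    · exact absurd (hpq.1 htN) htq
    · exact ⟨htx.1, htx.2.1.trans hpq.2⟩
  obtain ⟨u, hu, hGu⟩ := exists_mem_upperBounds_of_isNested hG hnz hTz
  obtain ⟨s, hs⟩ := exists_isLUB_of_mem_upperBounds hu
  -- A join `s ∈ G` would lie strictly above `t₀ ∈ {g} ∪ N`, hence in `D`, and below `u`, hence
  -- below an element of `T` or below `z`.
  refine ⟨s, hs, fun hsG => ?_⟩
  have hlt : ∀ t ∈ (T : Set L), t < s := fun t ht =>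
    IsAntichain.lt_of_isLUB (fun a ha b hb hab => hanti a ha b hb hab)
      (Finset.one_lt_card_iff_nontrivial.1 hcard) hs ht
  have hsD : s ∈ D := by
    rcases hT ht₀T with rfl | ht₀N | ht₀x'
    · exact hg s hsG (hlt _ ht₀T)
    · exact hD t₀ (hND ht₀N) s hsG (hlt _ ht₀T).le
    · exact absurd ht₀x' ht₀x
  rcases hGu s hsG (hs.2 hu) with ⟨t, htT, hst⟩ | hsz
  · exact (hlt t htT).not_ge hst
  · exact hzD s hsD hsz

theorem exists_isLUB_pair_of_isNested_insert (hG : IsBuilding G) (hDG : D ⊆ G)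
    (hgD : ∀ d ∈ D, ¬ d ≤ g) {p : Set L × L} (hp : p ∈ blowupModel G D)
    (hB : IsNested G (insert g (p.1 ∪ maxBelow G p.2))) :
    ∃ w, IsLUB {g, p.2} w ∧ (p.1, w) ∈ blowupModel G D := by
  obtain ⟨hND, hxD, -⟩ := hp
  have hA : insert g (maxBelow G p.2) ⊆ insert g (p.1 ∪ maxBelow G p.2) :=
    Set.insert_subset_insert Set.subset_union_right
  obtain ⟨w, hw, hmax⟩ := hB.exists_isLUB_maxBelow_subset hG hA
  have hub : upperBounds {g, p.2} = upperBounds (insert g (maxBelow G p.2)) := by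
    rw [upperBounds_insert, upperBounds_insert, upperBounds_singleton,
      (isLUB_maxBelow hG p.2).upperBounds_eq]
  refine ⟨w, by rw [IsLUB, hub]; exact hw, hND, fun d hd hdw => ?_, hB.mono ?_⟩
  · obtain ⟨m, hm, hdm⟩ := exists_le_mem_maxBelow (hDG hd) hdw
    rcases hmax hm with rfl | hmx
    · exact hgD d hd hdm
    · exact hxD d hd (hdm.trans hmx.2.1)
  · exact Set.union_subset (Set.subset_union_left.trans (Set.subset_insert _ _)) (hmax.trans hA)

theorem exists_isLUB_copy_iff (hG : IsBuilding G) (hDG : D ⊆ G)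
    (hD : ∀ d ∈ D, ∀ h ∈ G, d ≤ h → h ∈ D) (hgG : g ∈ G) (hg : ∀ h ∈ G, g < h → h ∈ D)
    (hgD : ∀ d ∈ D, ¬ d ≤ g) {q : blowupModel G D} :
    (∃ j, IsLUB {blowupModelCopy G hgD, q} j) ↔
      IsNested G (insert g (q.1.1 ∪ maxBelow G q.1.2)) := by
  constructor
  · rintro ⟨j, hj⟩
    exact isNested_insert_of_le hG hD hgG hg q.2 j.2 (hj.1 (Or.inr rfl)) (hj.1 (Or.inl rfl)).2
  · intro hB
    obtain ⟨w, hw, hmem⟩ := exists_isLUB_pair_of_isNested_insert hG hDG hgD q.2 hB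
    refine ⟨⟨_, hmem⟩, ?_, fun r hr => ⟨(hr (Or.inr rfl)).1, hw.2 ?_⟩⟩
    · rintro r (rfl | rfl)
      · exact ⟨Set.empty_subset _, hw.1 (Or.inl rfl)⟩
      · exact ⟨subset_rfl, hw.1 (Or.inr rfl)⟩
    · rintro _ (rfl | rfl)
      exacts [(hr (Or.inl rfl)).2, (hr (Or.inr rfl)).2]

noncomputable def blowupModelIso (hG : IsBuilding G) (hDG : D ⊆ G)
    (hD : ∀ d ∈ D, ∀ h ∈ G, d ≤ h → h ∈ D) (hgG : g ∈ G) (hg : ∀ h ∈ G, g < h → h ∈ D)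
    (hgD : ∀ d ∈ D, ¬ d ≤ g) :
    Blowup (blowupModel G D) (blowupModelCopy G hgD) ≃o blowupModel G (insert g D) where
  toFun z := ⟨(cond z.1.1 (insert g z.1.2.1.1) z.1.2.1.1, z.1.2.1.2),
    cond_insert_mem_blowupModel z.1.2.2 (fun h => z.2.1 ⟨Set.empty_subset _, h⟩)
      fun hb => (exists_isLUB_copy_iff hG hDG hD hgG hg hgD).1 (z.2.2 hb)⟩
  invFun p := ⟨(decide (g ∈ p.1.1), ⟨(p.1.1 \ {g}, p.1.2), sdiff_singleton_mem_blowupModel p.2⟩),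
    fun h => p.2.2.1 g (Set.mem_insert _ _) h.2,
    fun hb => (exists_isLUB_copy_iff hG hDG hD hgG hg hgD).2 (by
      rw [← Set.insert_union, Set.insert_sdiff_singleton,
        Set.insert_eq_of_mem (of_decide_eq_true hb)]
      exact p.2.2.2)⟩
  left_inv := by
    rintro ⟨⟨b, q⟩, -, -⟩
    have hgq : g ∉ q.1.1 := fun h => hgD g (q.2.1 h) le_rfl
    refine Subtype.ext (Prod.ext ?_ (Subtype.ext (Prod.ext ?_ rfl))) <;> cases b <;> simp [hgq]
  right_inv p := by
    refine Subtype.ext (Prod.ext ?_ rfl)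
    by_cases hgp : g ∈ p.1.1 <;> simp [hgp]
  map_rel_iff' {z z'} := by
    have hgN : ∀ q : blowupModel G D, g ∉ q.1.1 := fun q h => hgD g (q.2.1 h) le_rfl
    exact (and_congr_left' (Set.cond_insert_subset_cond_insert_iff (hgN _) (hgN _))).trans and_assoc

end Model

namespace BlowupState

variable {L : Type u}

noncomputable def blowupAt (S : BlowupState L) (a : S.carrier) : BlowupState L :=
  letI := S.order
  { carrier := Blowup S.carrier a
    order := blowupPartialOrder a
    emb := fun y => (S.emb y).bind fun b => if h : ¬ a ≤ b then some (Blowup.mk1 b h) else none }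

theorem blowupStep_eq_blowupAt {S : BlowupState L} {g : L} {a : S.carrier}
    (h : S.emb g = some a) : blowupStep S g = S.blowupAt a := by
  unfold blowupStep blowupAt
  rw [h]
  dsimp only
  congr 1
  funext y
  cases S.emb y <;> rfl

theorem blowupStep_eq_self {S : BlowupState L} {g : L} (h : S.emb g = none) :
    blowupStep S g = S := by
  unfold blowupStep
  rw [h]

theorem blowupAt_emb_eq_some_iff {S : BlowupState L} {a : S.carrier} {y : L}
    {z : (S.blowupAt a).carrier} :
    (S.blowupAt a).emb y = some z ↔ z.1.1 = false ∧ S.emb y = some z.1.2 := by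
  let _ := S.order
  refine (Option.bind_eq_some_iff (b := (z : Blowup S.carrier a))).trans ⟨?_, fun ⟨hz, hy⟩ => ?_⟩
  · rintro ⟨c, hy, hcz⟩
    by_cases hac : a ≤ c
    · simp [hac] at hcz
    · rw [dif_pos hac] at hcz
      obtain rfl := Option.some_inj.1 hcz
      exact ⟨rfl, hy⟩
  · refine ⟨_, hy, ?_⟩
    rw [dif_pos z.2.1]
    exact congrArg some (Subtype.ext (Prod.ext hz.symm rfl))

variable [SemilatticeInf L] {G D : Set L} {S : BlowupState L}

def ModeledBy (S : BlowupState L) (G D : Set L) : Prop :=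
  letI := S.order
  ∃ e : S.carrier ≃o blowupModel G D, ∀ y a, S.emb y = some a ↔ (e a).1 = (∅, y)

theorem ModeledBy.emb_eq_none (hS : S.ModeledBy G D) {d y : L} (hd : d ∈ D) (hdy : d ≤ y) :
    S.emb y = none := by
  obtain ⟨e, he⟩ := hS
  rcases h : S.emb y with _ | a
  · rfl
  · have hy : (e a).1.2 = y := congrArg Prod.snd ((he y a).1 h)
    exact ((e a).2.2.1 d hd (hy ▸ hdy)).elim

variable [Finite L]

theorem modeledBy_initState (G : Set L) : (initState L).ModeledBy G ∅ := by
  refine ⟨{ toFun := fun y => blowupModelCopy G (D := ∅) (y := y) fun _ hd => hd.elim,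
            invFun := fun p => p.1.2
            left_inv := fun _ => rfl
            right_inv := fun p => Subtype.ext (Prod.ext (Set.subset_empty_iff.1 p.2.1).symm rfl)
            map_rel_iff' := ⟨fun h => h.2, fun h => ⟨subset_rfl, h⟩⟩ }, fun y a => ?_⟩
  exact Option.some_inj.trans ⟨fun h => h ▸ rfl, fun h => (congrArg Prod.snd h).symm⟩

variable [OrderBot L] {g : L}

theorem ModeledBy.blowupStep_insert (hG : IsBuilding G) (hDG : D ⊆ G)
    (hD : ∀ d ∈ D, ∀ h ∈ G, d ≤ h → h ∈ D) (hgG : g ∈ G) (hg : ∀ h ∈ G, g < h → h ∈ D)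
    (hgD : g ∉ D) (hS : S.ModeledBy G D) : (blowupStep S g).ModeledBy G (insert g D) := by
  let _ := S.order
  have hgD' : ∀ d ∈ D, ¬ d ≤ g := fun d hd hdg => hgD (hD d hd g hgG hdg)
  obtain ⟨e, he⟩ := hS
  have hemb : S.emb g = some (e.symm (blowupModelCopy G hgD')) :=
    (he _ _).2 (by simp [blowupModelCopy])
  rw [blowupStep_eq_blowupAt hemb]
  refine ⟨(Blowup.congr e (e.apply_symm_apply _)).trans (blowupModelIso hG hDG hD hgG hg hgD'),
    fun y z => ?_⟩
  rw [blowupAt_emb_eq_some_iff, he]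
  change _ ↔ (cond z.1.1 (insert g (e z.1.2).1.1) (e z.1.2).1.1, (e z.1.2).1.2) = ((∅ : Set L), y)
  generalize z.1.1 = b
  cases b <;> simp [Prod.ext_iff, (Set.insert_nonempty _ _).ne_empty]

theorem ModeledBy.foldl_blowupStep (hG : IsBuilding G) (l : List L)
    (hD : ∀ d ∈ D, ∀ h ∈ G, d ≤ h → h ∈ D) (hDl : D ∪ {a | a ∈ l} = G)
    (hl : l.Pairwise fun a b => ¬ a < b) (hS : S.ModeledBy G D) :
    (l.foldl blowupStep S).ModeledBy G G := by
  induction l generalizing D S with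
  | nil => simpa [← hDl] using hS
  | cons g l ih =>
    have hcons : {a | a ∈ g :: l} = insert g {a | a ∈ l} := by
      ext
      exact List.mem_cons
    rw [hcons] at hDl
    rw [List.foldl_cons]
    by_cases hgD : g ∈ D
    · rw [blowupStep_eq_self (hS.emb_eq_none hgD le_rfl)]
      refine ih hD ?_ hl.of_cons hS
      rwa [Set.union_insert, Set.insert_eq_of_mem (Set.mem_union_left _ hgD)] at hDl
    rw [Set.union_insert] at hDl
    have hDG : D ⊆ G := fun d hd => hDl ▸ Or.inr (Or.inl hd)
    have hgG : g ∈ G := hDl ▸ Or.inl rfl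
    have hg : ∀ h ∈ G, g < h → h ∈ D := by
      intro h hh hgh
      rcases hDl ▸ hh with rfl | hhD | hhl
      · exact (lt_irrefl _ hgh).elim
      · exact hhD
      · exact ((List.pairwise_cons.1 hl).1 h hhl hgh).elim
    refine ih (D := insert g D) ?_ (by rwa [Set.insert_union]) hl.of_cons
      (hS.blowupStep_insert hG hDG hD hgG hg hgD)
    rintro d (rfl | hd) h hh hdh
    · rcases hdh.eq_or_lt with rfl | hlt
      exacts [Or.inl rfl, Or.inr (hg h hh hlt)]
    · exact Or.inr (hD d hd h hh hdh)

end BlowupState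

section Final

variable {L : Type u} [SemilatticeInf L] [OrderBot L] {G : Set L}

theorem maxBelow_bot (hG : IsBuilding G) : maxBelow G ⊥ = ∅ :=
  Set.eq_empty_of_forall_notMem fun m hm => hG.1 m hm.1 (le_bot_iff.1 hm.2.1)

theorem snd_eq_bot_of_mem_blowupModel (hG : IsBuilding G) {p : Set L × L}
    (hp : p ∈ blowupModel G G) : p.2 = ⊥ :=
  eq_bot_of_forall_not_le hG hp.2.1

noncomputable def blowupModelNestedIso (hG : IsBuilding G) :
    blowupModel G G ≃o {N : Set L // IsNested G N} where
  toFun p := ⟨p.1.1, by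
    simpa [snd_eq_bot_of_mem_blowupModel hG p.2, maxBelow_bot hG] using p.2.2.2⟩
  invFun N := ⟨(N.1, ⊥), N.2.1, fun g hg hle => hG.1 g hg (le_bot_iff.1 hle), by
    rw [maxBelow_bot hG, Set.union_empty]
    exact N.2⟩
  left_inv p := Subtype.ext (Prod.ext rfl (snd_eq_bot_of_mem_blowupModel hG p.2).symm)
  right_inv _ := rfl
  map_rel_iff' {p _} :=
    ⟨fun h => ⟨h, (snd_eq_bot_of_mem_blowupModel hG p.2).trans_le bot_le⟩, fun h => h.1⟩

end Final

theorem iterated_blowup_eq_nested_set_complex_general {L : Type u} [SemilatticeInf L] [Fintype L]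
    [OrderBot L] (G : Set L) (hG : IsBuilding G) (l : List L)
    (hlG : {a : L | a ∈ l} = G)
    (hord : l.Pairwise fun a b => ¬ a < b) :
    ∃ e : (iterBlowup L l).carrier ≃ {N : Set L // IsNested G N},
      ∀ a b : (iterBlowup L l).carrier,
        (@LE.le _ (iterBlowup L l).order.toPreorder.toLE a b) ↔ e a ≤ e b := by
  have hmodel : (iterBlowup L l).ModeledBy G G :=
    BlowupState.ModeledBy.foldl_blowupStep hG l (fun _ hd => hd.elim)
      (by rw [Set.empty_union, hlG]) hord (BlowupState.modeledBy_initState G)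
  let _ := (iterBlowup L l).order
  obtain ⟨e, -⟩ := hmodel
  let f := e.trans (blowupModelNestedIso hG)
  exact ⟨f.toEquiv, fun a b => f.le_iff_le.symm⟩

/-- blowing up all elements of a building set `G`, in an order such that
`Gᵢ > Gⱼ` implies `i < j`, yields a poset isomorphic to the face poset of the nested set
complex, i.e. to the nested subsets of `G` ordered by inclusion. -/
theorem iterated_blowup_eq_nested_set_complex {L : Type u} [SemilatticeInf L] [Fintype L]
    [OrderBot L] (G : Set L) (hG : IsBuilding G) (l : List L)
    (hnd : l.Nodup) (hlG : {a : L | a ∈ l} = G)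
    (hord : l.Pairwise fun a b => ¬ a < b) :
    ∃ e : (iterBlowup L l).carrier ≃ {N : Set L // IsNested G N},
      ∀ a b : (iterBlowup L l).carrier,
        (@LE.le _ (iterBlowup L l).order.toPreorder.toLE a b) ↔ e a ≤ e b :=
  iterated_blowup_eq_nested_set_complex_general G hG l hlG hord
end

section
/- Let V be a finite-dimensional complex inner product space and A a finite set of linear subspaces of V. If G ⊆ L(A)* \ {0} is a geometric building set for A, then G is a combinatorial building set of the poset L(A)* ordered by inclusion: for every U ∈ L(A)* \ {0}, writing max G_{≤U} = {G₁,…,G_k}, the map (α₁,…,α_k) ↦ α₁ + … + α_k is a poset isomorphism from ∏_{j=1}^k [0, G_j] to [0, U] sending the tuple which is G_j in coordinate j and 0 elsewhere to G_j. -/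
attribute [local instance] Classical.propDecidable

universe u

noncomputable section

open Module

variable {V : Type} [NormedAddCommGroup V] [InnerProductSpace ℂ V] [FiniteDimensional ℂ V]

/-- `L(A)*`: the orthogonal complements of the intersections of subfamilies of `A`,
as a set of submodules (ordered by inclusion). -/
def Lstar (A : Finset (Submodule ℂ V)) : Set (Submodule ℂ V) :=
  {W | ∃ S : Finset (Submodule ℂ V), S ⊆ A ∧ W = (S.inf id)ᗮ}

instance LstarOrderBot (A : Finset (Submodule ℂ V)) : OrderBot ↥(Lstar A) where
  bot := ⟨⊥, ∅, by simp, by simp⟩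
  bot_le := fun w => show (⊥ : Submodule ℂ V) ≤ (w : Submodule ℂ V) from bot_le

/-- `D` is a decomposition of `U` in the sense of De Concini–Procesi: `D ⊆ L(A)*`,
`U` is the internal direct sum of `D`, and every `W ∈ L(A)*` with `W ≤ U` is the internal
direct sum of the intersections `d ⊓ W`, each of which again lies in `L(A)*`. -/
def IsDecompositionOf (A : Finset (Submodule ℂ V)) (D : Set (Submodule ℂ V))
    (U : Submodule ℂ V) : Prop :=
  D ⊆ Lstar A ∧ sSupIndep D ∧ sSup D = U ∧
  ∀ W ∈ Lstar A, W ≤ U →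
    (∀ d ∈ D, d ⊓ W ∈ Lstar A) ∧
    iSupIndep (fun d : D => (d : Submodule ℂ V) ⊓ W) ∧
    (⨆ d : D, (d : Submodule ℂ V) ⊓ W) = W

lemma Lstar_finite (A : Finset (Submodule ℂ V)) : (Lstar A).Finite := by
  apply Set.Finite.subset (Finset.finite_toSet
    (A.powerset.image (fun S : Finset (Submodule ℂ V) => ((S.inf id)ᗮ : Submodule ℂ V))))
  rintro W ⟨S, hS, rfl⟩
  simp only [Finset.coe_image, Set.mem_image, Finset.mem_coe, Finset.mem_powerset]
  exact ⟨S, hS, rfl⟩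

lemma Lstar_bot_mem (A : Finset (Submodule ℂ V)) : (⊥ : Submodule ℂ V) ∈ Lstar A :=
  ⟨∅, by simp, by simp⟩

lemma Lstar_sup_mem {A : Finset (Submodule ℂ V)} {W₁ W₂ : Submodule ℂ V}
    (h1 : W₁ ∈ Lstar A) (h2 : W₂ ∈ Lstar A) : W₁ ⊔ W₂ ∈ Lstar A := by
  obtain ⟨S₁, hS₁, rfl⟩ := h1
  obtain ⟨S₂, hS₂, rfl⟩ := h2
  refine ⟨S₁ ∪ S₂, Finset.union_subset hS₁ hS₂, ?_⟩
  have h : S₁.inf id ⊓ S₂.inf id = ((S₁.inf id)ᗮ ⊔ (S₂.inf id)ᗮ)ᗮ := by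
    rw [← Submodule.inf_orthogonal, Submodule.orthogonal_orthogonal,
      Submodule.orthogonal_orthogonal]
  rw [Finset.inf_union, h, Submodule.orthogonal_orthogonal]

lemma Lstar_sSup_mem {A : Finset (Submodule ℂ V)} {s : Set (Submodule ℂ V)}
    (hs : s.Finite) (h : s ⊆ Lstar A) : sSup s ∈ Lstar A := by
  refine Set.Finite.induction_on (motive := fun s _ => s ⊆ Lstar A → sSup s ∈ Lstar A) s hs
    (fun _ => by simpa using Lstar_bot_mem A) ?_ h
  intro a t _ _ ih h
  rw [sSup_insert]
  exact Lstar_sup_mem (h (Set.mem_insert a t)) (ih fun x hx => h (Set.mem_insert_of_mem a hx))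

/-- a geometric building set for a complex subspace arrangement is a
combinatorial building set of `L(A)*`, with the product decomposition realized by taking
sums of subspaces. -/
theorem geometric_building_is_combinatorial (A : Finset (Submodule ℂ V))
    (G : Set ↥(Lstar A)) (hG0 : ∀ g ∈ G, g ≠ ⊥)
    (hG : ∀ U : ↥(Lstar A), IsDecompositionOf A (Subtype.val '' maxBelow G U) U.val) :
    ∀ U : ↥(Lstar A), U ≠ ⊥ →
      ∃ φ : ((g : maxBelow G U) → Set.Iic (g : ↥(Lstar A))) ≃o Set.Iic U,
        (∀ α : (g : maxBelow G U) → Set.Iic (g : ↥(Lstar A)),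
            ((φ α : ↥(Lstar A)) : Submodule ℂ V)
              = ⨆ g : maxBelow G U, ((α g : ↥(Lstar A)) : Submodule ℂ V)) ∧
        (∀ g : maxBelow G U, (φ (deltaTuple G U g) : ↥(Lstar A)) = (g : ↥(Lstar A))) := by
  intro U _
  haveI : Finite ↥(Lstar A) := (Lstar_finite A).to_subtype
  obtain ⟨hDsub, hindep, hsup, hdecomp⟩ := hG U
  set M : Set ↥(Lstar A) := maxBelow G U with hM
  set D : Set (Submodule ℂ V) := Subtype.val '' M with hD
  -- independence of the family of maximal elements, indexed by `M`
  have hind : iSupIndep (fun g : M => ((g : ↥(Lstar A)) : Submodule ℂ V)) := by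
    have h1 : iSupIndep ((↑) : D → Submodule ℂ V) := (sSupIndep_iff D).1 hindep
    have hinj : Function.Injective
        (fun g : M => (⟨((g : ↥(Lstar A)) : Submodule ℂ V), ⟨(g : ↥(Lstar A)), g.2, rfl⟩⟩ : D)) := by
      intro a b hab
      apply Subtype.ext; apply Subtype.ext
      exact congrArg (fun x : D => (x : Submodule ℂ V)) hab
    exact h1.comp hinj
  -- the sum map
  set sup : ((g : M) → Set.Iic (g : ↥(Lstar A))) → Submodule ℂ V :=
    fun α => ⨆ g : M, ((α g : ↥(Lstar A)) : Submodule ℂ V) with hsupdef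
  have hcoe_le : ∀ (g : M) (α : (g : M) → Set.Iic (g : ↥(Lstar A))),
      ((α g : ↥(Lstar A)) : Submodule ℂ V) ≤ ((g : ↥(Lstar A)) : Submodule ℂ V) :=
    fun g α => (α g).2
  have sup_mem : ∀ α, sup α ∈ Lstar A := by
    intro α
    have : sup α = sSup (Set.range fun g : M => ((α g : ↥(Lstar A)) : Submodule ℂ V)) :=
      (sSup_range).symm
    rw [this]
    apply Lstar_sSup_mem (Set.finite_range _)
    rintro _ ⟨g, rfl⟩
    exact ((α g : ↥(Lstar A))).2
  have sup_le : ∀ α, sup α ≤ (U : Submodule ℂ V) :=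
    fun α => iSup_le fun g => le_trans (hcoe_le g α) g.2.2.1
  -- key computation A : g ⊓ sup α = α g
  have keyA : ∀ (α : (g : M) → Set.Iic (g : ↥(Lstar A))) (g : M),
      ((g : ↥(Lstar A)) : Submodule ℂ V) ⊓ sup α = ((α g : ↥(Lstar A)) : Submodule ℂ V) := by
    intro α g
    apply le_antisymm
    · set T : Submodule ℂ V := ⨆ (h : M) (_ : h ≠ g), ((h : ↥(Lstar A)) : Submodule ℂ V) with hT
      have h1 : sup α ≤ ((α g : ↥(Lstar A)) : Submodule ℂ V) ⊔ T := by
        apply iSup_le; intro h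
        by_cases hh : h = g
        · subst hh; exact le_sup_left
        · exact le_sup_of_le_right (le_iSup_of_le h (le_iSup_of_le hh (hcoe_le h α)))
      have h2 : ((g : ↥(Lstar A)) : Submodule ℂ V) ⊓ sup α
          ≤ (((α g : ↥(Lstar A)) : Submodule ℂ V) ⊔ T) ⊓ ((g : ↥(Lstar A)) : Submodule ℂ V) := by
        rw [inf_comm]
        exact inf_le_inf_right _ h1
      refine h2.trans ?_
      rw [sup_inf_assoc_of_le _ (hcoe_le g α)]
      have h3 : T ⊓ ((g : ↥(Lstar A)) : Submodule ℂ V) = ⊥ := by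
        rw [inf_comm]
        exact disjoint_iff.1 (hind g)
      rw [h3, sup_bot_eq]
    · exact le_inf (hcoe_le g α)
        (le_iSup (fun h : M => ((α h : ↥(Lstar A)) : Submodule ℂ V)) g)
  -- key computation B : decomposition of any W ≤ U
  have memB : ∀ (g : M) (W : Submodule ℂ V), W ∈ Lstar A → W ≤ (U : Submodule ℂ V) →
      ((g : ↥(Lstar A)) : Submodule ℂ V) ⊓ W ∈ Lstar A := by
    intro g W hW hWU
    exact (hdecomp W hW hWU).1 _ ⟨(g : ↥(Lstar A)), g.2, rfl⟩
  have keyB : ∀ (W : Submodule ℂ V), W ∈ Lstar A → W ≤ (U : Submodule ℂ V) →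
      (⨆ g : M, ((g : ↥(Lstar A)) : Submodule ℂ V) ⊓ W) = W := by
    intro W hW hWU
    have h1 := (hdecomp W hW hWU).2.2
    apply le_antisymm
    · exact iSup_le fun g => inf_le_right
    · conv_lhs => rw [← h1]
      apply iSup_le; rintro ⟨d, g, hg, rfl⟩
      exact le_iSup_of_le ⟨g, hg⟩ le_rfl
  -- the equivalence
  let e : ((g : M) → Set.Iic (g : ↥(Lstar A))) ≃ Set.Iic U :=
  { toFun := fun α => ⟨⟨sup α, sup_mem α⟩, Set.mem_Iic.2 (Subtype.coe_le_coe.1 (sup_le α))⟩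
    invFun := fun W => fun g =>
      ⟨⟨((g : ↥(Lstar A)) : Submodule ℂ V) ⊓ ((W : ↥(Lstar A)) : Submodule ℂ V),
          memB g _ (W : ↥(Lstar A)).2 W.2⟩,
        Set.mem_Iic.2 (Subtype.coe_le_coe.1 inf_le_left)⟩
    left_inv := by
      intro α; funext g
      apply Subtype.ext; apply Subtype.ext
      exact keyA α g
    right_inv := by
      intro W
      apply Subtype.ext; apply Subtype.ext
      exact keyB _ (W : ↥(Lstar A)).2 W.2 }
  have hmono : ∀ {α β : (g : M) → Set.Iic (g : ↥(Lstar A))}, α ≤ β → e α ≤ e β := by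
    intro α β h
    have h' : sup α ≤ sup β :=
      iSup_mono fun g => Subtype.coe_le_coe.2 (Subtype.coe_le_coe.2 (h g))
    exact Subtype.coe_le_coe.1 (Subtype.coe_le_coe.1 h')
  refine ⟨{ toEquiv := e, map_rel_iff' := ?_ }, fun α => rfl, ?_⟩
  · intro α β
    constructor
    · intro h g
      have h' : sup α ≤ sup β := h
      refine Subtype.coe_le_coe.1 ?_
      refine Subtype.coe_le_coe.1 ?_
      show ((α g : ↥(Lstar A)) : Submodule ℂ V) ≤ ((β g : ↥(Lstar A)) : Submodule ℂ V)
      rw [← keyA α g, ← keyA β g]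
      exact inf_le_inf_left _ h'
    · exact hmono
  · intro g
    apply Subtype.ext
    show sup (deltaTuple G U g) = ((g : ↥(Lstar A)) : Submodule ℂ V)
    apply le_antisymm
    · apply iSup_le; intro h
      by_cases hc : (h : ↥(Lstar A)) = (g : ↥(Lstar A))
      · simp only [deltaTuple, if_pos hc]
        exact le_of_eq (congrArg Subtype.val hc)
      · simp only [deltaTuple, if_neg hc]
        exact bot_le
    · refine le_iSup_of_le g ?_
      simp only [deltaTuple, if_pos rfl]
      exact le_rfl

end
end
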